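/- For all nonnegative integers r1, r2 and every variable x ranging over nonnegative integers, the product of q-binomial coefficients linearizes as [x choose r1]_q · [x choose r2]_q = Σ_{k≥0} q^{(r1-k)(r2-k)} · ( [r1+r2-k]!_q / ([k]!_q [r1-k]!_q [r2-k]!_q) ) · [x choose r1+r2-k]_q, i.e. with q-multinomial coefficients [r1+r2-k choose k, r1-k, r2-k]_q as structure constants. -/
import Mathlib


open Finset

/-- The variable `q`, as a rational function over `ℚ`. -/
noncomputable def q : RatFunc ℚ := RatFunc.X

/-- The q-integer `[m]_q = (1 - q^m)/(1 - q)`. -/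
noncomputable def qint (m : ℕ) : RatFunc ℚ := (1 - q ^ m) / (1 - q)

/-- The q-integer for an integer exponent, `[x; q] = (q^x - 1)/(q - 1)`. -/
noncomputable def qintZ (x : ℤ) : RatFunc ℚ := (q ^ x - 1) / (q - 1)

/-- The q-factorial `[m]!_q`. -/
noncomputable def qfac (m : ℕ) : RatFunc ℚ := ∏ i ∈ Finset.range m, qint (i + 1)

/-- The Gaussian q-binomial coefficient `[a choose b]_q`, zero when `b < 0` or `b > a`. -/
noncomputable def qbin (a b : ℤ) : RatFunc ℚ :=
  if 0 ≤ b ∧ b ≤ a then qfac a.toNat / (qfac b.toNat * qfac (a - b).toNat) else 0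

/-- The first generalized q-binomial coefficient `(n choose p, k)_q`:
`([n]_q/[k]_q) · Σ_{r≥0} [p choose r]_q [n-p choose r]_q [n-r-1 choose k-r-1]_q
  q^{(n-p)p + r(r-k)}`. -/
noncomputable def gchoose (n p k : ℕ) : RatFunc ℚ :=
  (qint n / qint k) *
    ∑ r ∈ Finset.range (n + 1),
      qbin p r * qbin ((n : ℤ) - p) r * qbin ((n : ℤ) - r - 1) ((k : ℤ) - r - 1) *
        q ^ (((n : ℤ) - p) * p + (r : ℤ) * ((r : ℤ) - k))

lemma q_ne_zero : q ≠ 0 := RatFunc.X_ne_zero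

lemma q_pow_ne_one (n : ℕ) (hn : n ≠ 0) : q ^ n ≠ 1 := by
  intro h
  have h2 : (algebraMap (Polynomial ℚ) (RatFunc ℚ)) (Polynomial.X ^ n) =
      (algebraMap (Polynomial ℚ) (RatFunc ℚ)) 1 := by
    simpa [q, RatFunc.algebraMap_X] using h
  have h3 := RatFunc.algebraMap_injective ℚ h2
  have h4 := congrArg (Polynomial.eval (0 : ℚ)) h3
  simp [Polynomial.eval_pow, zero_pow hn] at h4

lemma one_sub_q_pow_ne (n : ℕ) (hn : n ≠ 0) : (1 : RatFunc ℚ) - q ^ n ≠ 0 := by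
  intro h
  exact q_pow_ne_one n hn (by linear_combination -h)

lemma one_sub_q_ne : (1 : RatFunc ℚ) - q ≠ 0 := by
  have := one_sub_q_pow_ne 1 one_ne_zero
  simpa using this

lemma qint_ne_zero (m : ℕ) (hm : m ≠ 0) : qint m ≠ 0 := by
  unfold qint
  exact div_ne_zero (one_sub_q_pow_ne m hm) one_sub_q_ne

lemma qfac_ne_zero (m : ℕ) : qfac m ≠ 0 := by
  unfold qfac
  exact Finset.prod_ne_zero_iff.2 fun i _ => qint_ne_zero (i+1) (Nat.succ_ne_zero i)

lemma qfac_succ (m : ℕ) : qfac (m+1) = qfac m * qint (m+1) := Finset.prod_range_succ _ _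

lemma qfac_zero : qfac 0 = 1 := Finset.prod_range_zero _

lemma qbin_of_le {a b : ℕ} (h : b ≤ a) :
    qbin a b = qfac a / (qfac b * qfac (a-b)) := by
  unfold qbin
  rw [if_pos ⟨Int.ofNat_nonneg b, by exact_mod_cast h⟩]
  have h1 : ((a:ℤ)).toNat = a := Int.toNat_natCast a
  have h2 : ((b:ℤ)).toNat = b := Int.toNat_natCast b
  have h3 : ((a:ℤ) - b).toNat = a - b := by omega
  rw [h1, h2, h3]

lemma qbin_neg {a b : ℤ} (h : b < 0) : qbin a b = 0 := by
  unfold qbin; rw [if_neg]; omega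

lemma qbin_gt {a b : ℤ} (h : a < b) : qbin a b = 0 := by
  unfold qbin; rw [if_neg]; omega

lemma qbin_zero_right {a : ℕ} : qbin a 0 = 1 := by
  rw [show (0:ℤ) = ((0:ℕ):ℤ) by simp, qbin_of_le (Nat.zero_le a)]
  simp [qfac_zero, div_self (qfac_ne_zero a)]

lemma qbin_self {a : ℕ} : qbin a a = 1 := by
  rw [qbin_of_le (le_refl a)]
  simp [qfac_zero, div_self (qfac_ne_zero a)]

lemma qint_split {a b : ℕ} (h : b ≤ a) : qint a = qint (a - b) + q ^ (a - b) * qint b := by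
  have key : q ^ (a - b) * q ^ b = q ^ a := by rw [← pow_add]; congr 1; omega
  unfold qint
  field_simp [sub_ne_zero.mpr (Ne.symm (fun hq => q_pow_ne_one 1 one_ne_zero (by simpa using hq.symm)))]
  linear_combination (1 - q)⁻¹ * key

lemma pascal (a : ℕ) (b : ℤ) :
    qbin ((a:ℤ)+1) b = qbin a b + q ^ ((a:ℤ)+1-b) * qbin a (b-1) := by
  rcases lt_trichotomy b 0 with hb | hb | hb
  · rw [qbin_neg hb, qbin_neg hb, qbin_neg (by omega : b - 1 < 0)]; ring
  · subst hb
    rw [show ((a:ℤ)+1) = ((a+1:ℕ):ℤ) by push_cast; ring, qbin_zero_right,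
        qbin_zero_right, qbin_neg (by omega : (0:ℤ) - 1 < 0), mul_zero, add_zero]
  · obtain ⟨bn, rfl⟩ := Int.eq_ofNat_of_zero_le hb.le
    have hbn : 1 ≤ bn := by exact_mod_cast hb
    rcases Nat.lt_or_ge a bn with hab | hab
    · rcases Nat.lt_or_ge (a+1) bn with hab2 | hab2
      · rw [qbin_gt (by exact_mod_cast hab2 : (a:ℤ)+1 < (bn:ℤ)),
            qbin_gt (by exact_mod_cast hab : (a:ℤ) < (bn:ℤ)),
            qbin_gt (by omega : (a:ℤ) < (bn:ℤ) - 1), mul_zero, add_zero]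
      · -- bn = a + 1
        have hba : bn = a + 1 := by omega
        subst hba
        rw [show ((a:ℤ)+1) = (((a+1:ℕ)):ℤ) by push_cast; ring, qbin_self,
            qbin_gt (by exact_mod_cast hab : (a:ℤ) < ((a+1:ℕ):ℤ)),
            show (((a+1:ℕ)):ℤ) - 1 = ((a:ℕ):ℤ) by push_cast; ring, qbin_self]
        simp
    · -- main case 1 ≤ bn ≤ a
      rw [show ((a:ℤ)+1) = (((a+1:ℕ)):ℤ) by push_cast; ring,
          qbin_of_le (by omega : bn ≤ a + 1), qbin_of_le hab,
          show ((bn:ℕ):ℤ) - 1 = (((bn-1:ℕ)):ℤ) by omega, qbin_of_le (by omega : bn - 1 ≤ a),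
          show (((a+1:ℕ)):ℤ) - ((bn:ℕ):ℤ) = (((a+1-bn:ℕ)):ℤ) by omega, zpow_natCast]
      have e1 : qfac (a+1) = qfac a * qint (a+1) := qfac_succ a
      have e2 : qfac bn = qfac (bn-1) * qint bn := by
        have := qfac_succ (bn-1); rwa [show bn - 1 + 1 = bn by omega] at this
      have e3 : qfac (a+1-bn) = qfac (a-bn) * qint (a+1-bn) := by
        have := qfac_succ (a-bn); rwa [show a - bn + 1 = a + 1 - bn by omega] at this
      have e4 : a - (bn - 1) = a + 1 - bn := by omega
      have key : qint (a+1) = qint (a+1-bn) + q ^ (a+1-bn) * qint bn :=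
        qint_split (by omega)
      rw [e1, e2, e3, e4, key]
      have n1 := qfac_ne_zero a
      have n2 := qfac_ne_zero (bn-1)
      have n3 := qfac_ne_zero (a-bn)
      have n4 := qint_ne_zero bn (by omega)
      have n5 := qint_ne_zero (a+1-bn) (by omega)
      have e3' : qfac (a+1-bn) = qfac (a-bn) * qint (a+1-bn) := e3
      rw [e3']
      field_simp

lemma qbin_zero_right' {a : ℤ} (h : 0 ≤ a) : qbin a 0 = 1 := by
  unfold qbin
  rw [if_pos ⟨le_refl 0, h⟩]
  simp [qfac_zero, div_self (qfac_ne_zero _)]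

lemma vdm (m n : ℕ) : ∀ r : ℕ, qbin ((m+n : ℕ)) (r:ℕ) =
    ∑ k ∈ Finset.range (r+1),
      qbin m k * qbin n ((r:ℤ)-k) * q ^ (((m:ℤ)-k)*((r:ℤ)-k)) := by
  induction n with
  | zero =>
    intro r
    rw [Finset.sum_eq_single_of_mem r (Finset.self_mem_range_succ r)]
    · rw [show (r:ℤ) - r = 0 by ring, mul_zero, zpow_zero]
      simp [qbin_self]
      rw [qbin_zero_right' (le_refl 0), mul_one]
    · intro k hk hne
      have hk' : k < r := by simp [Finset.mem_range] at hk; omega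
      rw [qbin_gt (by push_cast; omega : ((0:ℕ):ℤ) < (r:ℤ)-k)]
      ring
  | succ n ih =>
    intro r
    cases r with
    | zero =>
      simp only [Nat.cast_zero, zero_add, Finset.range_one, Finset.sum_singleton]
      simp only [Nat.cast_add, Nat.cast_one, sub_zero, mul_zero, zpow_zero, mul_one, sub_self]
      rw [qbin_zero_right' (by positivity), qbin_zero_right' (by positivity),
          qbin_zero_right' (by positivity)]
      ring
    | succ s =>
      have hL : qbin (↑(m+(n+1)) : ℤ) (↑(s+1) : ℤ) =
          qbin (↑(m+n) : ℤ) (↑(s+1) : ℤ) +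
            q ^ (((m+n:ℕ):ℤ)+1-((s+1:ℕ):ℤ)) * qbin (↑(m+n) : ℤ) ((↑(s+1):ℤ)-1) := by
        rw [show ((m+(n+1):ℕ):ℤ) = ((m+n:ℕ):ℤ)+1 by push_cast; ring]
        exact pascal (m+n) ((s+1:ℕ):ℤ)
      rw [hL]
      have hR : ∀ k ∈ Finset.range (s+1+1),
          qbin m k * qbin (↑(n+1):ℤ) (((s+1:ℕ):ℤ)-k) * q ^ (((m:ℤ)-k)*(((s+1:ℕ):ℤ)-k)) =
          qbin m k * qbin n (((s+1:ℕ):ℤ)-k) * q ^ (((m:ℤ)-k)*(((s+1:ℕ):ℤ)-k)) +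
          q ^ (((m+n:ℕ):ℤ)+1-((s+1:ℕ):ℤ)) *
            (qbin m k * qbin n (((s:ℕ):ℤ)-k) * q ^ (((m:ℤ)-k)*(((s:ℕ):ℤ)-k))) := by
        intro k hk
        rw [show ((n+1:ℕ):ℤ) = ((n:ℕ):ℤ)+1 by push_cast; ring,
            pascal n (((s+1:ℕ):ℤ)-k),
            show ((s+1:ℕ):ℤ)-(k:ℤ)-1 = ((s:ℕ):ℤ)-k by push_cast; ring]
        have hq : q ^ (((n:ℕ):ℤ)+1-(((s+1:ℕ):ℤ)-k)) * q ^ (((m:ℤ)-k)*(((s+1:ℕ):ℤ)-k)) =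
            q ^ (((m+n:ℕ):ℤ)+1-((s+1:ℕ):ℤ)) * q ^ (((m:ℤ)-k)*(((s:ℕ):ℤ)-k)) := by
          rw [← zpow_add₀ q_ne_zero, ← zpow_add₀ q_ne_zero]
          congr 1
          push_cast
          ring
        linear_combination (qbin m (k:ℤ) * qbin n (((s:ℕ):ℤ)-k)) * hq
      rw [Finset.sum_congr rfl hR, Finset.sum_add_distrib, ← ih (s+1),
          ← Finset.mul_sum, Finset.sum_range_succ,
          show ((s:ℕ):ℤ) - ((s+1:ℕ):ℤ) = -1 by push_cast; ring,
          qbin_neg (by omega : (-1:ℤ) < 0)]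
      rw [show ((s+1:ℕ):ℤ) - 1 = ((s:ℕ):ℤ) by push_cast; ring, ← ih s]
      ring

lemma subset1 (a n b : ℕ) :
    qbin (↑(a+n) : ℤ) (↑a : ℤ) * qbin (↑n : ℤ) (↑b : ℤ) =
      qbin (↑(a+n) : ℤ) (↑(a+b) : ℤ) * qbin (↑(a+b) : ℤ) (↑a : ℤ) := by
  rcases Nat.lt_or_ge n b with h | h
  · rw [qbin_gt (by exact_mod_cast h : (↑n:ℤ) < ↑b),
        qbin_gt (by exact_mod_cast (by omega : a + n < a + b) : (↑(a+n):ℤ) < ↑(a+b))]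
    ring
  · rw [qbin_of_le (by omega : a ≤ a + n), qbin_of_le h,
        qbin_of_le (by omega : a + b ≤ a + n), qbin_of_le (by omega : a ≤ a + b),
        show a + n - a = n by omega, show a + n - (a + b) = n - b by omega,
        show a + b - a = b by omega]
    have n1 := qfac_ne_zero a
    have n2 := qfac_ne_zero b
    have n3 := qfac_ne_zero (n-b)
    have n4 := qfac_ne_zero n
    have n5 := qfac_ne_zero (a+b)
    field_simp

lemma multinom (r1 r2 k : ℕ) (h1 : k ≤ r1) (h2 : k ≤ r2) :
    qbin (↑(r1+(r2-k)) : ℤ) (↑r1 : ℤ) * qbin (↑r1 : ℤ) (↑k : ℤ) =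
      qfac (r1+r2-k) / (qfac k * qfac (r1-k) * qfac (r2-k)) := by
  rw [qbin_of_le (by omega : r1 ≤ r1 + (r2-k)), qbin_of_le h1,
      show r1 + (r2-k) - r1 = r2 - k by omega, show r1 + (r2-k) = r1 + r2 - k by omega]
  have n1 := qfac_ne_zero r1
  have n2 := qfac_ne_zero k
  have n3 := qfac_ne_zero (r1-k)
  have n4 := qfac_ne_zero (r2-k)
  field_simp

theorem q_linearization (r1 r2 x : ℕ) :
    qbin x r1 * qbin x r2 =
      ∑ k ∈ Finset.range (min r1 r2 + 1),
        q ^ ((r1 - k) * (r2 - k)) *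
          (qfac (r1 + r2 - k) / (qfac k * qfac (r1 - k) * qfac (r2 - k))) *
          qbin x ((r1 : ℤ) + r2 - k) := by
  rcases Nat.lt_or_ge x r1 with hx1 | hx1
  · rw [qbin_gt (by exact_mod_cast hx1 : (x:ℤ) < (r1:ℤ)), zero_mul]
    symm
    apply Finset.sum_eq_zero
    intro k hk
    have hk' : k ≤ min r1 r2 := by simp only [Finset.mem_range] at hk; omega
    rw [qbin_gt (by push_cast; omega : (x:ℤ) < (r1:ℤ)+r2-k), mul_zero]
  rcases Nat.lt_or_ge x r2 with hx2 | hx2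
  · rw [qbin_gt (by exact_mod_cast hx2 : (x:ℤ) < (r2:ℤ)), mul_zero]
    symm
    apply Finset.sum_eq_zero
    intro k hk
    have hk' : k ≤ min r1 r2 := by simp only [Finset.mem_range] at hk; omega
    rw [qbin_gt (by push_cast; omega : (x:ℤ) < (r1:ℤ)+r2-k), mul_zero]
  obtain ⟨n, rfl⟩ : ∃ n, x = r1 + n := ⟨x - r1, by omega⟩
  rw [vdm r1 n r2, Finset.mul_sum]
  rw [← Finset.sum_subset (Finset.range_subset_range.2 (by omega : min r1 r2 + 1 ≤ r2 + 1))
      (fun k hk hk' => by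
        have h1 : r1 < k := by simp only [Finset.mem_range] at hk hk'; omega
        rw [qbin_gt (by exact_mod_cast h1 : ((r1:ℕ):ℤ) < ((k:ℕ):ℤ))]
        ring)]
  apply Finset.sum_congr rfl
  intro k hk
  have hk1 : k ≤ r1 := by simp only [Finset.mem_range] at hk; omega
  have hk2 : k ≤ r2 := by simp only [Finset.mem_range] at hk; omega
  rw [show ((r2:ℕ):ℤ) - (k:ℕ) = ((r2-k:ℕ):ℤ) by omega,
      show ((r1:ℕ):ℤ) - (k:ℕ) = ((r1-k:ℕ):ℤ) by omega,
      show ((r1-k:ℕ):ℤ) * ((r2-k:ℕ):ℤ) = (((r1-k)*(r2-k):ℕ):ℤ) by push_cast; ring,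
      zpow_natCast,
      show ((r1:ℕ):ℤ) + (r2:ℕ) - (k:ℕ) = ((r1+(r2-k):ℕ):ℤ) by omega]
  have e1 := subset1 r1 n (r2-k)
  have e2 := multinom r1 r2 k hk1 hk2
  linear_combination
    (q ^ ((r1-k)*(r2-k)) * qbin ((r1:ℕ):ℤ) ((k:ℕ):ℤ)) * e1 +
    (q ^ ((r1-k)*(r2-k)) * qbin ((r1+n:ℕ):ℤ) ((r1+(r2-k):ℕ):ℤ)) * e2
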